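/- arXiv:math/0003062 — 2 statements merged into one kernel-verified Lean document; each statement's English description precedes it below -/
import Mathlib

section
/- Let K be a number field, S a finite set of maximal ideals of O_K, and R = O_{K,S}. Let c, d ∈ R, not both zero, defining the point q = (c : d) ∈ P¹(K). Suppose there exist a, b ∈ R with aR + bR = R and ad − bc ∈ R^×. Then the set of points (a' : b') ∈ P¹(K) admitting representatives a', b' ∈ R with a'R + b'R = R and a'd − b'c ∈ R^× is infinite, hence Zariski dense in P¹. -/
set_option maxHeartbeats 1000000


open IsDedekindDomain NumberField

/-- **A rational curve with a rational point removed has Zariski dense `S`-integral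
points as soon as it has one** (Proposition 6.5 of the paper, stated in coordinates).

Let `K` be a number field, `S` a finite set of maximal ideals of `𝓞 K` and `R` the ring
of `S`-integers.  Let `q = (c : d) ∈ ℙ¹(K)` with `c, d ∈ R` not both zero.  If there
exist `a, b ∈ R` with `aR + bR = R` and `ad − bc ∈ Rˣ` (i.e. `(ℙ¹, q)` has an
`S`-integral point), then the set of points `(a' : b') ∈ ℙ¹(K)` admitting
representatives `a', b' ∈ R` with `a'R + b'R = R` and `a'd − b'c ∈ Rˣ` is infinite,
hence Zariski dense in `ℙ¹`. -/
theorem projective_line_minus_point_integral_points_dense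
    (K : Type) [Field K] [NumberField K]
    (S : Finset (HeightOneSpectrum (𝓞 K)))
    (c d : ((S : Set (HeightOneSpectrum (𝓞 K))).integer K))
    (hcd : ¬ (c = 0 ∧ d = 0))
    (hpt : ∃ a b : ((S : Set (HeightOneSpectrum (𝓞 K))).integer K),
      Ideal.span {a, b} = ⊤ ∧ IsUnit (a * d - b * c)) :
    { x : Projectivization K (Fin 2 → K) |
      ∃ a b : ((S : Set (HeightOneSpectrum (𝓞 K))).integer K),
        Ideal.span {a, b} = ⊤ ∧ IsUnit (a * d - b * c) ∧
        ∃ h : ![(a : K), (b : K)] ≠ 0,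
          x = Projectivization.mk K ![(a : K), (b : K)] h }.Infinite := by
  obtain ⟨a, b, -, hu⟩ := hpt
  -- The coerced "determinant" is nonzero in K.
  have hU : ((a : K) * d - (b : K) * c) ≠ 0 := by
    have h0 : (a * d - b * c : ((S : Set (HeightOneSpectrum (𝓞 K))).integer K)) ≠ 0 :=
      hu.ne_zero
    intro h
    apply h0
    have : ((a * d - b * c : ((S : Set (HeightOneSpectrum (𝓞 K))).integer K)) : K) = 0 := by
      push_cast
      exact h
    exact_mod_cast this
  -- the family of integral points
  have hvec : ∀ n : ℕ,
      (![((a + (n : _) * c : ((S : Set (HeightOneSpectrum (𝓞 K))).integer K)) : K),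
         ((b + (n : _) * d : ((S : Set (HeightOneSpectrum (𝓞 K))).integer K)) : K)] : Fin 2 → K) ≠ 0 := by
    intro n h
    have h1 : ((a + (n : _) * c : ((S : Set (HeightOneSpectrum (𝓞 K))).integer K)) : K) = 0 :=
      congrFun h 0
    have h2 : ((b + (n : _) * d : ((S : Set (HeightOneSpectrum (𝓞 K))).integer K)) : K) = 0 :=
      congrFun h 1
    push_cast at h1 h2
    apply hU
    linear_combination (d : K) * h1 - (c : K) * h2
  set f : ℕ → Projectivization K (Fin 2 → K) := fun n =>
    Projectivization.mk K _ (hvec n) with hf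
  refine Set.infinite_of_injective_forall_mem (f := f) ?_ ?_
  · -- injectivity
    intro m n hmn
    rw [hf] at hmn
    simp only at hmn
    rw [Projectivization.mk_eq_mk_iff] at hmn
    obtain ⟨t, ht⟩ := hmn
    have h1 : (t : K) * (((a : K) + n * c)) = (a : K) + m * c := by
      have := congrFun ht 0
      simpa [Units.smul_def, smul_eq_mul, mul_add] using this
    have h2 : (t : K) * (((b : K) + n * d)) = (b : K) + m * d := by
      have := congrFun ht 1
      simpa [Units.smul_def, smul_eq_mul, mul_add] using this
    have key : ((n : K) - m) * ((a : K) * d - (b : K) * c) = 0 := by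
      linear_combination ((a : K) + n * c) * h2 - ((b : K) + n * d) * h1
    have hnm : (n : K) = m := by
      rcases mul_eq_zero.mp key with h | h
      · exact sub_eq_zero.mp h
      · exact absurd h hU
    exact_mod_cast hnm.symm
  · -- each f n lies in the set
    intro n
    have hmem : (a + (n : _) * c) * d - (b + (n : _) * d) * c ∈
        Ideal.span {a + (n : _) * c, b + (n : _) * d} := by
      rw [Ideal.mem_span_pair]
      exact ⟨d, -c, by ring⟩
    have hueq : IsUnit ((a + (n : _) * c) * d - (b + (n : _) * d) * c) := by
      have heq : (a + (n : _) * c) * d - (b + (n : _) * d) * c = a * d - b * c := by ring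
      rw [heq]; exact hu
    exact ⟨a + (n : _) * c, b + (n : _) * d,
      Ideal.eq_top_of_isUnit_mem _ hmem hueq, hueq, hvec n, rfl⟩
end

section
/- Define sequences (u_n) and (v_n) of polynomials in ℤ[t] by u₀ = 1, v₀ = 0, u₁ = 216t⁶ − 1, v₁ = 12t³, and the recursions u_{n+1} = 2(216t⁶ − 1)u_n − u_{n−1} and v_{n+1} = 2(216t⁶ − 1)v_n − v_{n−1}. Then u_n² − 3(108t⁶ − 1)v_n² = 1 for every n ≥ 0, and v_n ≠ 0 for every n ≥ 1. In particular (u₁, v₁) = (216t⁶ − 1, 12t³) is a solution of the norm equation u² − 3(108t⁶ − 1)v² = 1 over ℚ(t) none of whose powers (u_n, v_n) with n ≥ 1 equals the identity (1, 0), i.e., it is a section of infinite order. -/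
open Polynomial

/-- **A section of infinite order of the norm group scheme `u² − 3(108t⁶ − 1)v² = 1`**
(the appendix of the paper, after Lehmer).

Define sequences `(uₙ)` and `(vₙ)` in `ℤ[t]` by `u₀ = 1`, `v₀ = 0`,
`u₁ = 216t⁶ − 1`, `v₁ = 12t³`, and `x_{n+1} = 2(216t⁶ − 1)xₙ − x_{n−1}`.  Then
`uₙ² − 3(108t⁶ − 1)vₙ² = 1` for every `n`, and `vₙ ≠ 0` for every `n ≥ 1`; in
particular `(u₁, v₁) = (216t⁶ − 1, 12t³)` is a solution of the norm equation none of
whose powers `(uₙ, vₙ)`, `n ≥ 1`, is the identity `(1, 0)`: it has infinite order. -/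
theorem lehmer_norm_equation_section_infinite_order
    (u v : ℕ → ℤ[X])
    (hu0 : u 0 = 1) (hv0 : v 0 = 0)
    (hu1 : u 1 = 216 * X ^ 6 - 1) (hv1 : v 1 = 12 * X ^ 3)
    (hurec : ∀ n : ℕ, u (n + 2) = 2 * (216 * X ^ 6 - 1) * u (n + 1) - u n)
    (hvrec : ∀ n : ℕ, v (n + 2) = 2 * (216 * X ^ 6 - 1) * v (n + 1) - v n) :
    (∀ n : ℕ, (u n) ^ 2 - 3 * (108 * X ^ 6 - 1) * (v n) ^ 2 = 1) ∧
    ∀ n : ℕ, 1 ≤ n → v n ≠ 0 := by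
  set a : ℤ[X] := 216 * X ^ 6 - 1 with ha
  set D : ℤ[X] := 3 * (108 * X ^ 6 - 1) with hD
  -- Strengthened invariant
  have key : ∀ n : ℕ, (u n) ^ 2 - D * (v n) ^ 2 = 1 ∧
      (u (n+1)) ^ 2 - D * (v (n+1)) ^ 2 = 1 ∧
      u (n+1) * u n - D * (v (n+1) * v n) = a := by
    intro n
    induction n with
    | zero =>
      refine ⟨?_, ?_, ?_⟩ <;> simp only [hu0, hv0, hu1, hv1, ha, hD] <;> ring
    | succ n ih =>
      obtain ⟨h1, h2, h3⟩ := ih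
      refine ⟨h2, ?_, ?_⟩
      · rw [hurec n, hvrec n]
        have : (2 * a * u (n + 1) - u n) ^ 2 - D * (2 * a * v (n + 1) - v n) ^ 2
            = 4 * a ^ 2 * ((u (n+1))^2 - D * (v (n+1))^2)
              - 4 * a * (u (n+1) * u n - D * (v (n+1) * v n))
              + ((u n)^2 - D * (v n)^2) := by ring
        rw [this, h1, h2, h3]; ring
      · rw [hurec n, hvrec n]
        have : (2 * a * u (n + 1) - u n) * u (n + 1)
              - D * ((2 * a * v (n + 1) - v n) * v (n + 1))
            = 2 * a * ((u (n+1))^2 - D * (v (n+1))^2)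
              - (u (n+1) * u n - D * (v (n+1) * v n)) := by ring
        rw [this, h2, h3]; ring
  refine ⟨fun n => (key n).1, ?_⟩
  -- nonvanishing via evaluation at 1
  have hw : ∀ n : ℕ, 0 ≤ (v n).eval 1 ∧ (v n).eval 1 < (v (n+1)).eval 1 := by
    intro n
    induction n with
    | zero => simp [hv0, hv1]
    | succ n ih =>
      obtain ⟨h0, h1⟩ := ih
      have h2 : (v (n+2)).eval 1 = 430 * (v (n+1)).eval 1 - (v n).eval 1 := by
        rw [hvrec n]; simp [ha]
      constructor
      · linarith
      · rw [h2]; nlinarith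
  intro n hn hvn
  obtain ⟨m, rfl⟩ : ∃ m, n = m + 1 := ⟨n - 1, (Nat.succ_pred_eq_of_pos hn).symm⟩
  have := (hw m).1
  have := (hw m).2
  rw [hvn] at this
  simp at this
  omega
end
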